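/- S(Λ) = S^p · S^{p*}: every element of the cyclotomic q-Schur algebra S(Λ) is a finite sum of products φψ with φ ∈ S^p and ψ ∈ S^{p*}, where S^{p*} is the image of S^p under the algebra anti-automorphism * of S(Λ) determined on the cellular basis by φ_{ST} ↦ φ_{TS}. -/

import Mathlib

/-!
Common framework for the formalization of results of Shoji–Wada,
"Cyclotomic q-Schur algebras associated to the Ariki-Koike algebra".
-/

open scoped BigOperators TensorProduct
open MulOpposite

noncomputable section

/-! ## Multicompositions -/

/-- An `r`-multicomposition of `n`, whose `k`-th component is a composition
of length `≤ m k`. -/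
structure MultiComp (n r : ℕ) (m : Fin r → ℕ) where
  part : (k : Fin r) → Fin (m k) → ℕ
  sum_eq : (∑ k, ∑ i, part k i) = n

namespace MultiComp

variable {n r : ℕ} {m : Fin r → ℕ}

theorem part_injective : Function.Injective (part : MultiComp n r m → _) := by
  rintro ⟨a, _⟩ ⟨b, _⟩ h
  simpa using h

instance : DecidableEq (MultiComp n r m) := fun a b =>
  decidable_of_iff (a.part = b.part) part_injective.eq_iff

theorem part_le_n (lam : MultiComp n r m) (k : Fin r) (i : Fin (m k)) :
    lam.part k i ≤ n := by
  calc lam.part k i ≤ ∑ i, lam.part k i :=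
        Finset.single_le_sum (fun _ _ => Nat.zero_le _) (Finset.mem_univ i)
    _ ≤ ∑ k, ∑ i, lam.part k i :=
        Finset.single_le_sum (f := fun k => ∑ i, lam.part k i)
          (fun _ _ => Nat.zero_le _) (Finset.mem_univ k)
    _ = n := lam.sum_eq

instance : Fintype (MultiComp n r m) :=
  Fintype.ofInjective
    (fun lam (k : Fin r) (i : Fin (m k)) =>
      (⟨lam.part k i, Nat.lt_succ_of_le (part_le_n lam k i)⟩ : Fin (n + 1)))
    (fun a b h => part_injective (by
      funext k i
      exact congrArg Fin.val (congrFun (congrFun h k) i)))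

/-- an `r`-multipartition: every component is weakly decreasing -/
def IsPartition (lam : MultiComp n r m) : Prop :=
  ∀ (k : Fin r) (i j : Fin (m k)), i ≤ j → lam.part k j ≤ lam.part k i

instance (lam : MultiComp n r m) : Decidable lam.IsPartition := by
  unfold IsPartition; infer_instance

/-- the size `|λ^{(k)}|` of the `k`-th component -/
def compSize (lam : MultiComp n r m) (k : Fin r) : ℕ := ∑ i, lam.part k i

/-- the dominance order `λ ⊵ μ` on multicompositions -/
def Dominates (lam mu : MultiComp n r m) : Prop :=
  ∀ (k : Fin r) (i : Fin (m k)),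
    ((∑ c ∈ Finset.univ.filter fun c => c < k, mu.compSize c) +
        ∑ j ∈ Finset.univ.filter fun j => j ≤ i, mu.part k j) ≤
      (∑ c ∈ Finset.univ.filter fun c => c < k, lam.compSize c) +
        ∑ j ∈ Finset.univ.filter fun j => j ≤ i, lam.part k j

/-- the strict dominance order `λ ⊳ μ` -/
def SDominates (lam mu : MultiComp n r m) : Prop :=
  Dominates lam mu ∧ lam ≠ mu

end MultiComp

/-- `Λ` is a saturated set of multicompositions: it contains every multipartition
dominating one of its members. -/
def Saturated {n r : ℕ} {m : Fin r → ℕ} (Λ : Finset (MultiComp n r m)) : Prop :=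
  ∀ lam : MultiComp n r m, lam.IsPartition →
    (∃ mu ∈ Λ, MultiComp.Dominates lam mu) → lam ∈ Λ

/-! ## Tableaux -/

/-- the set of entries `(i,k)` (row `i` of component `k`) for tableaux -/
abbrev MCEntry (r : ℕ) (m : Fin r → ℕ) := Σ k : Fin r, Fin (m k)

/-- the total order on entries: `(i₁,k₁) ≤ (i₂,k₂)` iff `k₁ < k₂`, or `k₁ = k₂` and
`i₁ ≤ i₂`. -/
def entryLE {r : ℕ} {m : Fin r → ℕ} (a b : MCEntry r m) : Prop :=
  a.1 < b.1 ∨ (a.1 = b.1 ∧ (a.2 : ℕ) ≤ (b.2 : ℕ))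

/-- the associated strict order on entries -/
def entryLT {r : ℕ} {m : Fin r → ℕ} (a b : MCEntry r m) : Prop :=
  a.1 < b.1 ∨ (a.1 = b.1 ∧ (a.2 : ℕ) < (b.2 : ℕ))

/-- the cells `(k, i, j)` (component `k`, row `i`, column `j`) of the Young diagram
of a multicomposition -/
abbrev MultiComp.Cell {n r : ℕ} {m : Fin r → ℕ} (lam : MultiComp n r m) :=
  Σ (k : Fin r) (i : Fin (m k)), Fin (lam.part k i)

/-- Semistandard tableaux of shape `lam` and type `mu` in the sense of
Dipper–James–Mathas: rows weakly increase, columns strictly increase, the entries of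
the `k`-th component have second coordinate `≥ k`, and for each entry `(i,k)` the
number of cells carrying it equals `mu.part k i`. -/
structure SSTab {n r : ℕ} {m : Fin r → ℕ} (lam mu : MultiComp n r m) where
  entry : lam.Cell → MCEntry r m
  rowWeak : ∀ (k : Fin r) (i : Fin (m k)) (j j' : Fin (lam.part k i)),
    j ≤ j' → entryLE (entry ⟨k, i, j⟩) (entry ⟨k, i, j'⟩)
  colStrict : ∀ (k : Fin r) (i i' : Fin (m k)) (j : ℕ)
    (hj : j < lam.part k i) (hj' : j < lam.part k i'), i < i' →
    entryLT (entry ⟨k, i, ⟨j, hj⟩⟩) (entry ⟨k, i', ⟨j, hj'⟩⟩)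
  compLE : ∀ c : lam.Cell, c.1 ≤ (entry c).1
  typeCount : ∀ e : MCEntry r m,
    mu.part e.1 e.2 = Fintype.card {c : lam.Cell // entry c = e}

namespace SSTab

variable {n r : ℕ} {m : Fin r → ℕ} {lam mu : MultiComp n r m}

theorem entry_injective : Function.Injective (entry : SSTab lam mu → _) := by
  rintro ⟨a, _, _, _, _⟩ ⟨b, _, _, _, _⟩ h
  simpa using h

instance : Fintype (SSTab lam mu) := Fintype.ofInjective entry entry_injective

instance : DecidableEq (SSTab lam mu) := fun a b =>
  decidable_of_iff (a.entry = b.entry) entry_injective.eq_iff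

end SSTab

/-- Standard tableaux of shape `lam`: bijective fillings of the diagram by the
letters `1, …, n`, increasing along rows and down columns. -/
structure StdTab {n r : ℕ} {m : Fin r → ℕ} (lam : MultiComp n r m) where
  entry : lam.Cell → Fin n
  bij : Function.Bijective entry
  rowStrict : ∀ (k : Fin r) (i : Fin (m k)) (j j' : Fin (lam.part k i)),
    j < j' → entry ⟨k, i, j⟩ < entry ⟨k, i, j'⟩
  colStrict : ∀ (k : Fin r) (i i' : Fin (m k)) (j : ℕ)
    (hj : j < lam.part k i) (hj' : j < lam.part k i'), i < i' →
    entry ⟨k, i, ⟨j, hj⟩⟩ < entry ⟨k, i', ⟨j, hj'⟩⟩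

namespace StdTab

variable {n r : ℕ} {m : Fin r → ℕ} {lam : MultiComp n r m}

theorem entry_injective : Function.Injective (entry : StdTab lam → _) := by
  rintro ⟨a, _, _, _⟩ ⟨b, _, _, _⟩ h
  simpa using h

instance : Fintype (StdTab lam) := Fintype.ofInjective entry entry_injective

end StdTab
/-! ## The block structure attached to `p = (r₁, …, r_g)` -/

/-- componentwise comparison of vectors in `ℤ_{≥0}^g` -/
def vecLE {g : ℕ} (f h : Fin g → ℕ) : Prop := ∀ b, f b ≤ h b

instance {g : ℕ} (f h : Fin g → ℕ) : Decidable (vecLE f h) := by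
  unfold vecLE; infer_instance

/-- strict componentwise comparison: `f ≤ h` componentwise and `f ≠ h` -/
def vecLT {g : ℕ} (f h : Fin g → ℕ) : Prop := vecLE f h ∧ f ≠ h

instance {g : ℕ} (f h : Fin g → ℕ) : Decidable (vecLT f h) := by
  unfold vecLT; infer_instance

/-- The datum of `p = (r₁, …, r_g)`, encoded by the map sending a component
`k ∈ {1, …, r}` to its block: the fibers of `π` are the intervals
`{p_b + 1, …, p_b + r_b}`, of sizes `r_b > 0`. -/
structure BlockCtx (r g : ℕ) where
  π : Fin r → Fin g
  mono : Monotone π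
  surj : Function.Surjective π

namespace BlockCtx

variable {r g : ℕ} (P : BlockCtx r g) {n : ℕ} {m : Fin r → ℕ}

/-- `α_p(μ) = (n₁, …, n_g)`, `n_b = |μ^{[b]}|` -/
def alphaP (mu : MultiComp n r m) : Fin g → ℕ := fun b =>
  ∑ k ∈ Finset.univ.filter fun k => P.π k = b, mu.compSize k

/-- `a_p(μ) = (a₁, …, a_g)`, `a_b = n₁ + ⋯ + n_{b-1}` -/
def aP (mu : MultiComp n r m) : Fin g → ℕ := fun b =>
  ∑ k ∈ Finset.univ.filter fun k => P.π k < b, mu.compSize k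

/-- `r_b`, the number of components in block `b` -/
def rblk (b : Fin g) : ℕ := (Finset.univ.filter fun k => P.π k = b).card

/-- the components in block `b`, listed in increasing order -/
def blkEquiv (b : Fin g) :
    Fin (P.rblk b) ≃o {x // x ∈ Finset.univ.filter fun k => P.π k = b} :=
  (Finset.univ.filter fun k => P.π k = b).orderIsoOfFin rfl

/-- `m^{[b]}`, the row bounds of block `b` -/
def mblk (m : Fin r → ℕ) (b : Fin g) : Fin (P.rblk b) → ℕ :=
  fun i => m ((P.blkEquiv b i : {x // x ∈ Finset.univ.filter fun k => P.π k = b}) : Fin r)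

/-- the block component `μ^{[b]}` of a multicomposition, an `r_b`-multicomposition
of `n_b = α_p(μ)_b` -/
def restrictTo (mu : MultiComp n r m) (b : Fin g) (nb : ℕ)
    (h : P.alphaP mu b = nb) : MultiComp nb (P.rblk b) (P.mblk m b) where
  part := fun k i => mu.part ((P.blkEquiv b k :
    {x // x ∈ Finset.univ.filter fun k => P.π k = b}) : Fin r) i
  sum_eq := by
    subst h
    calc (∑ k : Fin (P.rblk b), ∑ i, mu.part ((P.blkEquiv b k :
            {x // x ∈ Finset.univ.filter fun k => P.π k = b}) : Fin r) i)
        = ∑ x : {x // x ∈ Finset.univ.filter fun k => P.π k = b},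
            mu.compSize (x : Fin r) :=
          Fintype.sum_equiv (P.blkEquiv b).toEquiv _ _ (fun _ => rfl)
      _ = ∑ k ∈ Finset.univ.filter fun k => P.π k = b, mu.compSize k :=
          Finset.sum_coe_sort _ _
      _ = P.alphaP mu b := rfl

theorem restrictTo_isPartition (mu : MultiComp n r m) (hmu : mu.IsPartition)
    (b : Fin g) (nb : ℕ) (h : P.alphaP mu b = nb) :
    (P.restrictTo mu b nb h).IsPartition :=
  fun k i j hij => hmu _ i j hij

/-- the largest component index in block `b` (that is, `p_b + r_b`) -/
def blockLast (b : Fin g) : Fin r :=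
  (Finset.univ.filter fun k => P.π k = b).max' (by
    obtain ⟨k, hk⟩ := P.surj b
    exact ⟨k, Finset.mem_filter.2 ⟨Finset.mem_univ _, hk⟩⟩)

end BlockCtx
/-! ## The cyclotomic q-Schur algebra with its Dipper–James–Mathas cellular basis -/

/-- the multicompositions belonging to `Λ` -/
abbrev LamS {n r : ℕ} {m : Fin r → ℕ} (Λ : Finset (MultiComp n r m)) := {x // x ∈ Λ}

/-- `Λ⁺`, the multipartitions belonging to `Λ` -/
abbrev LamP {n r : ℕ} {m : Fin r → ℕ} (Λ : Finset (MultiComp n r m)) :=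
  {x : MultiComp n r m // x ∈ Λ ∧ x.IsPartition}

/-- the index set of the Dipper–James–Mathas cellular basis
`{φ_{S,T} : S ∈ T₀(λ,μ), T ∈ T₀(λ,ν), λ ∈ Λ⁺, μ, ν ∈ Λ}` -/
abbrev DJMIndex {n r : ℕ} {m : Fin r → ℕ} (Λ : Finset (MultiComp n r m)) :=
  Σ (lam : LamP Λ) (mu : LamS Λ) (nu : LamS Λ), SSTab lam.1 mu.1 × SSTab lam.1 nu.1

/-- Abstract datum of the cyclotomic q-Schur algebra `S(Λ) = End_H(⊕_{μ∈Λ} M^μ)`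
together with its Dipper–James–Mathas cellular basis `φ_{S,T}`
(`bas ⟨λ, μ, ν, (S, T)⟩` is the basis element `φ_{S,T} ∈ Hom_H(M^ν, M^μ)` for
`S ∈ T₀(λ,μ)`, `T ∈ T₀(λ,ν)`), with its cellular anti-automorphism `*`
(`astar`), and the orthogonal idempotents `φ_μ = id_{M^μ}` (`phiId`). -/
structure SchurAlgebra (R : Type) [CommRing R] {n r : ℕ} {m : Fin r → ℕ}
    (Λ : Finset (MultiComp n r m)) where
  carrier : Type
  [ringI : Ring carrier]
  [algI : Algebra R carrier]
  bas : Module.Basis (DJMIndex Λ) R carrier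
  astar : carrier →ₗ[R] carrier
  astar_mul : ∀ x y : carrier, astar (x * y) = astar y * astar x
  astar_bas : ∀ (lam : LamP Λ) (mu nu : LamS Λ)
    (S : SSTab lam.1 mu.1) (T : SSTab lam.1 nu.1),
    astar (bas ⟨lam, mu, nu, (S, T)⟩) = bas ⟨lam, nu, mu, (T, S)⟩
  phiId : LamS Λ → carrier
  phiId_sum : ∑ mu : LamS Λ, phiId mu = 1
  phiId_mul : ∀ mu nu : LamS Λ, phiId mu * phiId nu = if mu = nu then phiId mu else 0
  phiId_mul_bas : ∀ (lam : LamP Λ) (mu nu : LamS Λ) (S : SSTab lam.1 mu.1)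
    (T : SSTab lam.1 nu.1) (rho : LamS Λ),
    phiId rho * bas ⟨lam, mu, nu, (S, T)⟩ =
      if rho = mu then bas ⟨lam, mu, nu, (S, T)⟩ else 0
  bas_mul_phiId : ∀ (lam : LamP Λ) (mu nu : LamS Λ) (S : SSTab lam.1 mu.1)
    (T : SSTab lam.1 nu.1) (rho : LamS Λ),
    bas ⟨lam, mu, nu, (S, T)⟩ * phiId rho =
      if rho = nu then bas ⟨lam, mu, nu, (S, T)⟩ else 0
  cellular : ∀ (a : carrier) (lam : LamP Λ) (mu : LamS Λ) (S : SSTab lam.1 mu.1),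
    ∃ c : (Σ mu' : LamS Λ, SSTab lam.1 mu'.1) → R,
      ∀ (nu : LamS Λ) (T : SSTab lam.1 nu.1),
        a * bas ⟨lam, mu, nu, (S, T)⟩ -
            ∑ x : Σ mu' : LamS Λ, SSTab lam.1 mu'.1,
              c x • bas ⟨lam, x.1, nu, (x.2, T)⟩ ∈
          Submodule.span R
            {y : carrier | ∃ (lam' : LamP Λ) (mu' nu' : LamS Λ)
              (S' : SSTab lam'.1 mu'.1) (T' : SSTab lam'.1 nu'.1),
              MultiComp.SDominates lam'.1 lam.1 ∧
              y = bas ⟨lam', mu', nu', (S', T')⟩}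

namespace SchurAlgebra

variable {R : Type} [CommRing R] {n r : ℕ} {m : Fin r → ℕ}
variable {Λ : Finset (MultiComp n r m)}

instance (SA : SchurAlgebra R Λ) : Ring SA.carrier := SA.ringI
instance (SA : SchurAlgebra R Λ) : Algebra R SA.carrier := SA.algI

/-- the two-sided ideal `S(Λ)^{∨λ}`, spanned by the `φ_{S,T}` of shape strictly
dominating `λ` -/
def SVee (SA : SchurAlgebra R Λ) (lam : LamP Λ) : Submodule R SA.carrier :=
  Submodule.span R
    {y : SA.carrier | ∃ (lam' : LamP Λ) (mu' nu' : LamS Λ)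
      (S' : SSTab lam'.1 mu'.1) (T' : SSTab lam'.1 nu'.1),
      MultiComp.SDominates lam'.1 lam.1 ∧ y = SA.bas ⟨lam', mu', nu', (S', T')⟩}

end SchurAlgebra

/-! ## The parabolic subalgebra `S^p` and its combinatorics -/

section PLayer

variable {R : Type} [CommRing R] {n r g : ℕ} {m : Fin r → ℕ}
variable {Λ : Finset (MultiComp n r m)}

/-- a semistandard tableau of shape `λ` together with its type `μ`,
i.e. an element of `T₀(λ) = ⋃_{μ ∈ Λ} T₀(λ,μ)` -/
abbrev TabOf (Λ : Finset (MultiComp n r m)) (lam : LamP Λ) :=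
  Σ mu : LamS Λ, SSTab lam.1 mu.1

/-- the condition defining `T₀^p(λ,μ) ⊆ T₀(λ,μ)`: `a_p(λ) = a_p(μ)` -/
def pCond (P : BlockCtx r g) (lam : LamP Λ) (x : TabOf Λ lam) : Prop :=
  P.aP x.1.1 = P.aP lam.1

instance (P : BlockCtx r g) (lam : LamP Λ) (x : TabOf Λ lam) :
    Decidable (pCond P lam x) := by
  unfold pCond; infer_instance

/-- `T₀^p(λ)`, the tableaux whose type has the same `a_p` as the shape -/
abbrev PTab (P : BlockCtx r g) (lam : LamP Λ) := {x : TabOf Λ lam // pCond P lam x}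

/-- `x` is the canonical tableau `T^λ = λ(t^λ)` of shape and type `λ` -/
def IsCanonical (lam : LamP Λ) (x : TabOf Λ lam) : Prop :=
  x.1.1 = lam.1 ∧ ∀ c : lam.1.Cell, x.2.entry c = ⟨c.1, c.2.1⟩

namespace SchurAlgebra

/-- the subset `Z^p` of the cellular basis: those `φ_{S,T}` with `S ∈ T₀(λ,μ)`,
`T ∈ T₀(λ,ν)` such that `a_p(λ) > a_p(μ)` whenever `α_p(μ) ≠ α_p(ν)` -/
def ZpSet (SA : SchurAlgebra R Λ) (P : BlockCtx r g) : Set SA.carrier :=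
  {x | ∃ (lam : LamP Λ) (mu nu : LamS Λ) (S : SSTab lam.1 mu.1) (T : SSTab lam.1 nu.1),
    (P.alphaP mu.1 ≠ P.alphaP nu.1 → vecLT (P.aP mu.1) (P.aP lam.1)) ∧
    x = SA.bas ⟨lam, mu, nu, (S, T)⟩}

/-- the subset `Z^p \ {φ_{S,T} : S, T ∈ T₀^p(λ)}` spanning the two-sided ideal
`\hat S^p` of `S^p` -/
def ZpHatSet (SA : SchurAlgebra R Λ) (P : BlockCtx r g) : Set SA.carrier :=
  {x | ∃ (lam : LamP Λ) (mu nu : LamS Λ) (S : SSTab lam.1 mu.1) (T : SSTab lam.1 nu.1),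
    (P.alphaP mu.1 ≠ P.alphaP nu.1 → vecLT (P.aP mu.1) (P.aP lam.1)) ∧
    ¬(P.aP mu.1 = P.aP lam.1 ∧ P.aP nu.1 = P.aP lam.1) ∧
    x = SA.bas ⟨lam, mu, nu, (S, T)⟩}

end SchurAlgebra

/-- the index set `Σ^p ⊆ Λ⁺ × {0,1}`, where `(λ,1)` is kept only if there exists
`μ ∈ Λ` with `a_p(λ) > a_p(μ)` and `T₀(λ,μ) ≠ ∅` -/
def SigmaPIdx (Λ : Finset (MultiComp n r m)) (P : BlockCtx r g) :=
  {e : LamP Λ × Bool // e.2 = true →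
    ∃ mu : LamS Λ, vecLT (P.aP mu.1) (P.aP e.1.1) ∧ Nonempty (SSTab e.1.1 mu.1)}

/-- the partial order on `Σ^p`: `(λ₁,ε₁) > (λ₂,ε₂)` iff `λ₁ ⊳ λ₂`, or `λ₁ = λ₂`
and `ε₁ > ε₂` -/
def sigmaGT (P : BlockCtx r g) (e f : SigmaPIdx Λ P) : Prop :=
  MultiComp.SDominates e.1.1.1 f.1.1.1 ∨
    (e.1.1 = f.1.1 ∧ e.1.2 = true ∧ f.1.2 = false)

/-- the element `(λ, 0)` of `Σ^p` -/
def eZero (P : BlockCtx r g) (lam : LamP Λ) : SigmaPIdx Λ P :=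
  ⟨(lam, false), fun h => (Bool.false_ne_true h).elim⟩

/-- the index set `I^p(ε)`: `T₀^p(λ)` for `ε = (λ,0)`, and
`⋃ {T₀(λ,μ) : a_p(λ) > a_p(μ)}` for `ε = (λ,1)` -/
def pIp (P : BlockCtx r g) (e : SigmaPIdx Λ P) : Set (TabOf Λ e.1.1) :=
  {x | (e.1.2 = true ∧ vecLT (P.aP x.1.1) (P.aP e.1.1.1)) ∨
       (e.1.2 = false ∧ pCond P e.1.1 x)}

/-- the index set `J^p(ε)`: `T₀^p(λ)` for `ε = (λ,0)`, and `T₀(λ)` for `ε = (λ,1)` -/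
def pJp (P : BlockCtx r g) (e : SigmaPIdx Λ P) : Set (TabOf Λ e.1.1) :=
  {x | e.1.2 = true ∨ pCond P e.1.1 x}

instance (P : BlockCtx r g) (e : SigmaPIdx Λ P) :
    DecidablePred (· ∈ pIp (Λ := Λ) P e) := fun x =>
  decidable_of_iff ((e.1.2 = true ∧ vecLT (P.aP x.1.1) (P.aP e.1.1.1)) ∨
    (e.1.2 = false ∧ pCond P e.1.1 x)) Iff.rfl

instance (P : BlockCtx r g) (e : SigmaPIdx Λ P) :
    DecidablePred (· ∈ pJp (Λ := Λ) P e) := fun x =>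
  decidable_of_iff (e.1.2 = true ∨ pCond P e.1.1 x) Iff.rfl

namespace SchurAlgebra

/-- the set `Z^p(ε) = {φ_{S,T} : S ∈ I^p(ε), T ∈ J^p(ε)}` -/
def ZpAt (SA : SchurAlgebra R Λ) (P : BlockCtx r g) (e : SigmaPIdx Λ P) :
    Set SA.carrier :=
  {x | ∃ S ∈ pIp P e, ∃ T ∈ pJp P e, x = SA.bas ⟨e.1.1, S.1, T.1, (S.2, T.2)⟩}

/-- the ideal `(S^p)^{∨ε}`, spanned by the `Z^p(ε')` for `ε' > ε` -/
def SpVee (SA : SchurAlgebra R Λ) (P : BlockCtx r g) (e : SigmaPIdx Λ P) :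
    Submodule R SA.carrier :=
  Submodule.span R (⋃ e' : {f : SigmaPIdx Λ P // sigmaGT P f e}, SA.ZpAt P e'.1)

end SchurAlgebra

end PLayer
/-! ## Based right modules and composition multiplicities -/

/-- a right `A`-module which is free as an `R`-module with a distinguished basis
indexed by `ι`; right `A`-modules are treated as left `Aᵐᵒᵖ`-modules -/
structure BasedRightModule (R : Type) [CommRing R] (A : Type) [Ring A]
    [Algebra R A] (ι : Type) where
  M : Type
  [abGrp : AddCommGroup M]
  [modR : Module R M]
  [modA : Module Aᵐᵒᵖ M]
  [tower : IsScalarTower R Aᵐᵒᵖ M]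
  bas : Module.Basis ι R M

namespace BasedRightModule

variable {R : Type} [CommRing R] {A : Type} [Ring A] [Algebra R A] {ι : Type}

instance (X : BasedRightModule R A ι) : AddCommGroup X.M := X.abGrp
instance (X : BasedRightModule R A ι) : Module R X.M := X.modR
instance (X : BasedRightModule R A ι) : Module Aᵐᵒᵖ X.M := X.modA
instance (X : BasedRightModule R A ι) : IsScalarTower R Aᵐᵒᵖ X.M := X.tower

end BasedRightModule

/-- `N` is the radical of the bilinear form on the based module `X` whose Gram
matrix in the distinguished basis is `f` -/
def IsFormRadical {R : Type} [CommRing R] {A : Type} [Ring A] [Algebra R A]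
    {ι : Type} [Fintype ι] (X : BasedRightModule R A ι) (f : ι → ι → R)
    (N : Submodule Aᵐᵒᵖ X.M) : Prop :=
  ∀ x : X.M, x ∈ N ↔ ∀ t : ι, (∑ s : ι, X.bas.repr x s * f s t) = 0

open Classical in
/-- the number of factors of the composition series `s` isomorphic to `L`: the
multiplicity `[M : L]` when `s` runs from `⊥` to `⊤` -/
noncomputable def factorMult {A : Type} [Ring A] {M : Type} [AddCommGroup M]
    [Module A M] (s : CompositionSeries (Submodule A M)) (L : Type)
    [AddCommGroup L] [Module A L] : ℕ :=
  (Finset.univ.filter fun i : Fin s.length =>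
    Nonempty ((↥(s i.succ) ⧸ Submodule.comap (s i.succ).subtype (s i.castSucc))
      ≃ₗ[A] L)).card

/-- a composition series of the full module: from `⊥` to `⊤` -/
def IsFullSeries {A : Type} [Ring A] {M : Type} [AddCommGroup M] [Module A M]
    (s : CompositionSeries (Submodule A M)) : Prop :=
  s.head = ⊥ ∧ s.last = ⊤
/-! ## The quotient algebra `\bar S^p` -/

section BarLayer

variable {R : Type} [CommRing R] {n r g : ℕ} {m : Fin r → ℕ}
variable {Λ : Finset (MultiComp n r m)}

/-- Abstract datum of the quotient algebra `\bar S^p = S^p / \hat S^p`: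
an `R`-algebra `B` together with the surjective projection `proj : S^p → B`,
whose kernel is the span of `Z^p \ {φ_{S,T} : S, T ∈ T₀^p(λ)}`, and the images
`\barφ_{S,T}` (`barphi`) of the basis elements, which form an `R`-basis of `B`. -/
structure BarSchurAlgebra {R : Type} [CommRing R] {n r : ℕ} {m : Fin r → ℕ}
    {Λ : Finset (MultiComp n r m)} {g : ℕ} (SA : SchurAlgebra R Λ)
    (P : BlockCtx r g) (Sp : Subalgebra R SA.carrier) where
  B : Type
  [ringB : Ring B]
  [algB : Algebra R B]
  proj : ↥Sp →ₐ[R] B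
  surj : Function.Surjective proj
  barphi : (lam : LamP Λ) → PTab P lam → PTab P lam → B
  bbas : Module.Basis (Σ lam : LamP Λ, PTab P lam × PTab P lam) R B
  bbas_eq : ∀ (lam : LamP Λ) (S T : PTab P lam), bbas ⟨lam, (S, T)⟩ = barphi lam S T
  proj_bas : ∀ (lam : LamP Λ) (mu nu : LamS Λ) (S : SSTab lam.1 mu.1)
    (T : SSTab lam.1 nu.1) (x : ↥Sp),
    (x : SA.carrier) = SA.bas ⟨lam, mu, nu, (S, T)⟩ →
    proj x = if h : pCond P lam ⟨mu, S⟩ ∧ pCond P lam ⟨nu, T⟩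
      then barphi lam ⟨⟨mu, S⟩, h.1⟩ ⟨⟨nu, T⟩, h.2⟩ else 0
  ker_char : ∀ x : ↥Sp, proj x = 0 ↔ (x : SA.carrier) ∈
    Submodule.span R (SA.ZpHatSet P)

namespace BarSchurAlgebra

variable {SA : SchurAlgebra R Λ} {P : BlockCtx r g} {Sp : Subalgebra R SA.carrier}

instance (BA : BarSchurAlgebra SA P Sp) : Ring BA.B := BA.ringB
instance (BA : BarSchurAlgebra SA P Sp) : Algebra R BA.B := BA.algB

/-- the two-sided ideal `(\bar S^p)^{∨λ}`, spanned by the `\barφ_{S,T}` of shape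
strictly dominating `λ` -/
def BarVee (BA : BarSchurAlgebra SA P Sp) (lam : LamP Λ) : Submodule R BA.B :=
  Submodule.span R {y : BA.B | ∃ (lam' : LamP Λ) (S T : PTab P lam'),
    MultiComp.SDominates lam'.1 lam.1 ∧ y = BA.barphi lam' S T}

end BarSchurAlgebra

/-! ## Characterizations of the various Weyl modules -/

namespace SchurAlgebra

/-- `W` is the Weyl module `W^λ` of `S(Λ)`: its basis `{φ_T}` is indexed by
`T₀(λ)` and the right action is the one inherited from multiplication in
`S(Λ)` modulo `S(Λ)^{∨λ}`. -/
def IsWeylModule (SA : SchurAlgebra R Λ) (lam : LamP Λ)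
    (W : BasedRightModule R SA.carrier (TabOf Λ lam)) : Prop :=
  ∀ (S T : TabOf Λ lam) (a : SA.carrier),
    SA.bas ⟨lam, S.1, T.1, (S.2, T.2)⟩ * a -
        ∑ T' : TabOf Λ lam, (W.bas.repr (MulOpposite.op a • W.bas T) T') •
          SA.bas ⟨lam, S.1, T'.1, (S.2, T'.2)⟩ ∈ SA.SVee lam

/-- `f` is the canonical bilinear form of the Weyl module `W^λ`, determined by
`φ_{T^λ,S} φ_{T,T^λ} ≡ ⟨φ_S, φ_T⟩ φ_{T^λ,T^λ} mod S(Λ)^{∨λ}`; here `tc` is the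
canonical tableau `T^λ`. -/
def IsWeylForm (SA : SchurAlgebra R Λ) (lam : LamP Λ) (tc : TabOf Λ lam)
    (f : TabOf Λ lam → TabOf Λ lam → R) : Prop :=
  ∀ S T : TabOf Λ lam,
    SA.bas ⟨lam, tc.1, S.1, (tc.2, S.2)⟩ * SA.bas ⟨lam, T.1, tc.1, (T.2, tc.2)⟩ -
      f S T • SA.bas ⟨lam, tc.1, tc.1, (tc.2, tc.2)⟩ ∈ SA.SVee lam

/-- `Z` is the standard right `S^p`-module `Z_p^ε` attached to `ε ∈ Σ^p`: its
basis `{φ_T^ε}` is indexed by `J^p(ε)` and the right `S^p`-action is inherited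
from multiplication in `S^p` modulo `(S^p)^{∨ε}`. -/
def IsZpModule (SA : SchurAlgebra R Λ) (P : BlockCtx r g)
    (Sp : Subalgebra R SA.carrier) (e : SigmaPIdx Λ P)
    (Z : BasedRightModule R ↥Sp {x : TabOf Λ e.1.1 // x ∈ pJp P e}) : Prop :=
  ∀ (S : {x : TabOf Λ e.1.1 // x ∈ pIp P e})
    (T : {x : TabOf Λ e.1.1 // x ∈ pJp P e}) (a : ↥Sp),
    SA.bas ⟨e.1.1, S.1.1, T.1.1, (S.1.2, T.1.2)⟩ * (a : SA.carrier) -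
        ∑ T' : {x : TabOf Λ e.1.1 // x ∈ pJp P e},
          (Z.bas.repr (MulOpposite.op a • Z.bas T) T') •
            SA.bas ⟨e.1.1, S.1.1, T'.1.1, (S.1.2, T'.1.2)⟩ ∈ SA.SpVee P e

/-- `f` is the canonical bilinear pairing `β_ε` between `◇Z_p^ε` and `Z_p^ε`,
determined by `φ_{U,T} φ_{S,V} ≡ β_ε(φ_S^ε, φ_T^ε) φ_{U,V} mod (S^p)^{∨ε}`. -/
def IsBetaForm (SA : SchurAlgebra R Λ) (P : BlockCtx r g) (e : SigmaPIdx Λ P)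
    (f : {x : TabOf Λ e.1.1 // x ∈ pIp P e} →
      {x : TabOf Λ e.1.1 // x ∈ pJp P e} → R) : Prop :=
  ∀ (U : {x : TabOf Λ e.1.1 // x ∈ pIp P e})
    (T : {x : TabOf Λ e.1.1 // x ∈ pJp P e})
    (S : {x : TabOf Λ e.1.1 // x ∈ pIp P e})
    (V : {x : TabOf Λ e.1.1 // x ∈ pJp P e}),
    SA.bas ⟨e.1.1, U.1.1, T.1.1, (U.1.2, T.1.2)⟩ *
        SA.bas ⟨e.1.1, S.1.1, V.1.1, (S.1.2, V.1.2)⟩ -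
      f S T • SA.bas ⟨e.1.1, U.1.1, V.1.1, (U.1.2, V.1.2)⟩ ∈ SA.SpVee P e

/-- `N` is the radical `rad Z_p^ε` of the pairing `β_ε` (with Gram matrix `f`). -/
def IsBetaRadical (SA : SchurAlgebra R Λ) (P : BlockCtx r g)
    (Sp : Subalgebra R SA.carrier) (e : SigmaPIdx Λ P)
    (Z : BasedRightModule R ↥Sp {x : TabOf Λ e.1.1 // x ∈ pJp P e})
    (f : {x : TabOf Λ e.1.1 // x ∈ pIp P e} →
      {x : TabOf Λ e.1.1 // x ∈ pJp P e} → R)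
    (N : Submodule (↥Sp)ᵐᵒᵖ Z.M) : Prop :=
  ∀ y : Z.M, y ∈ N ↔ ∀ S : {x : TabOf Λ e.1.1 // x ∈ pIp P e},
    (∑ T : {x : TabOf Λ e.1.1 // x ∈ pJp P e}, Z.bas.repr y T * f S T) = 0

end SchurAlgebra

namespace BarSchurAlgebra

variable {SA : SchurAlgebra R Λ} {P : BlockCtx r g} {Sp : Subalgebra R SA.carrier}

/-- `Z` is the Weyl (cell) module `\bar Z_p^λ` of the cellular algebra `\bar S^p`:
its basis `{\barφ_T}` is indexed by `T₀^p(λ)` and the right action is inherited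
from multiplication in `\bar S^p` modulo `(\bar S^p)^{∨λ}`. -/
def IsBarWeyl (BA : BarSchurAlgebra SA P Sp) (lam : LamP Λ)
    (Z : BasedRightModule R BA.B (PTab P lam)) : Prop :=
  ∀ (S T : PTab P lam) (b : BA.B),
    BA.barphi lam S T * b - ∑ T' : PTab P lam,
        (Z.bas.repr (MulOpposite.op b • Z.bas T) T') • BA.barphi lam S T' ∈
      BA.BarVee lam

/-- `f` is the canonical symmetric bilinear form `⟨·,·⟩_p` on `\bar Z_p^λ`,
determined by `\barφ_{T^λ,S} \barφ_{T,T^λ} ≡ ⟨\barφ_S, \barφ_T⟩_p \barφ_{T^λ,T^λ}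
mod (\bar S^p)^{∨λ}`; `tc` is the canonical tableau `T^λ`. -/
def IsBarForm (BA : BarSchurAlgebra SA P Sp) (lam : LamP Λ) (tc : PTab P lam)
    (f : PTab P lam → PTab P lam → R) : Prop :=
  ∀ S T : PTab P lam,
    BA.barphi lam tc S * BA.barphi lam T tc - f S T • BA.barphi lam tc tc ∈
      BA.BarVee lam

end BarSchurAlgebra

end BarLayer
/-! ## The Ariki–Koike algebra -/

/-- the defining relations of the Ariki–Koike algebra `H_{n,r}` on the generators
`T_0, T_1, …, T_{n-1}` (generator `i : Fin n` is `T_i`) -/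
inductive ArikiKoikeRel (R : Type) [CommRing R] (n r : ℕ) (q : Rˣ) (Q : Fin r → R) :
    FreeAlgebra R (Fin n) → FreeAlgebra R (Fin n) → Prop
  | cyclotomic (h : 0 < n) :
      ArikiKoikeRel R n r q Q
        (((List.finRange r).map fun j =>
          FreeAlgebra.ι R (⟨0, h⟩ : Fin n) - algebraMap R _ (Q j)).prod) 0
  | quadratic (i : Fin n) (hi : i.1 ≠ 0) :
      ArikiKoikeRel R n r q Q
        ((FreeAlgebra.ι R i - algebraMap R _ (q : R)) *
          (FreeAlgebra.ι R i + algebraMap R _ ((q⁻¹ : Rˣ) : R))) 0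
  | braid0 (h : 1 < n) :
      ArikiKoikeRel R n r q Q
        (FreeAlgebra.ι R (⟨0, Nat.lt_of_lt_of_le Nat.zero_lt_one h.le⟩ : Fin n) *
          FreeAlgebra.ι R (⟨1, h⟩ : Fin n) *
          FreeAlgebra.ι R (⟨0, Nat.lt_of_lt_of_le Nat.zero_lt_one h.le⟩ : Fin n) *
          FreeAlgebra.ι R (⟨1, h⟩ : Fin n))
        (FreeAlgebra.ι R (⟨1, h⟩ : Fin n) *
          FreeAlgebra.ι R (⟨0, Nat.lt_of_lt_of_le Nat.zero_lt_one h.le⟩ : Fin n) *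
          FreeAlgebra.ι R (⟨1, h⟩ : Fin n) *
          FreeAlgebra.ι R (⟨0, Nat.lt_of_lt_of_le Nat.zero_lt_one h.le⟩ : Fin n))
  | braid (i j : Fin n) (hi : i.1 ≠ 0) (hij : j.1 = i.1 + 1) :
      ArikiKoikeRel R n r q Q
        (FreeAlgebra.ι R i * FreeAlgebra.ι R j * FreeAlgebra.ι R i)
        (FreeAlgebra.ι R j * FreeAlgebra.ι R i * FreeAlgebra.ι R j)
  | comm (i j : Fin n) (hij : i.1 + 1 < j.1) :
      ArikiKoikeRel R n r q Q
        (FreeAlgebra.ι R i * FreeAlgebra.ι R j)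
        (FreeAlgebra.ι R j * FreeAlgebra.ι R i)

/-- the Ariki–Koike algebra `H_{n,r}` over `R` with parameters
`q, Q_1, …, Q_r` (with `q` invertible) -/
abbrev ArikiKoike (R : Type) [CommRing R] (n r : ℕ) (q : Rˣ) (Q : Fin r → R) :=
  RingQuot (ArikiKoikeRel R n r q Q)

/-! ## Corners `e·B·e` at an idempotent -/

/-- an idempotent element of a ring -/
structure IdemElem (B : Type) [Ring B] where
  e : B
  idem : e * e = e

/-- the corner `{x : B | e x e = x}` of `B` at the idempotent `e`;
for `e = \barφ_Ω` this is the modified Ariki–Koike algebra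
`\bar H^p = \barφ_Ω ⬝ \bar S^p ⬝ \barφ_Ω` of type `p` -/
def Corner {B : Type} [Ring B] (E : IdemElem B) := {x : B // E.e * x * E.e = x}

namespace Corner

variable {B : Type} [Ring B] {E : IdemElem B}

instance : Add (Corner E) :=
  ⟨fun x y => ⟨x.1 + y.1, by rw [mul_add, add_mul, x.2, y.2]⟩⟩

instance : Mul (Corner E) :=
  ⟨fun x y => ⟨x.1 * y.1, by
    have hx : E.e * x.1 = x.1 := by
      nth_rewrite 1 [← x.2]
      rw [← mul_assoc, ← mul_assoc, E.idem, x.2]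
    have hy : y.1 * E.e = y.1 := by
      nth_rewrite 1 [← y.2]
      rw [mul_assoc, E.idem, y.2]
    rw [← mul_assoc, hx, mul_assoc, hy]⟩⟩

instance : Zero (Corner E) := ⟨⟨0, by simp⟩⟩

instance : Neg (Corner E) := ⟨fun x => ⟨-x.1, by rw [mul_neg, neg_mul, x.2]⟩⟩

/-- the identity element `e` of the corner -/
def one (E : IdemElem B) : Corner E :=
  ⟨E.e, by rw [E.idem, E.idem]⟩

instance {R : Type} [CommRing R] [Algebra R B] : SMul R (Corner E) :=
  ⟨fun c x => ⟨c • x.1, by rw [mul_smul_comm, smul_mul_assoc, x.2]⟩⟩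

@[simp] theorem add_val (x y : Corner E) : (x + y).1 = x.1 + y.1 := rfl
@[simp] theorem mul_val (x y : Corner E) : (x * y).1 = x.1 * y.1 := rfl
@[simp] theorem smul_val {R : Type} [CommRing R] [Algebra R B] (c : R)
    (x : Corner E) : (c • x).1 = c • x.1 := rfl

end Corner

/-! ## The set `Ω` and the blocks of compositions of `n` -/

section OmegaLayer

variable {n r g : ℕ} {m : Fin r → ℕ}

/-- `ω ∈ Ω`: all the entries of `ω` are `0` or `1`, for each letter
`1 ≤ i ≤ n` the `i`-th rows of the components of `ω` have total size `1`,
and all nonzero rows occur in components which are last in their `p`-block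
(this uses `m_k ≥ n` for all `k`). -/
def IsOmega (P : BlockCtx r g) (hm : ∀ k, n ≤ m k) (om : MultiComp n r m) : Prop :=
  (∀ (k : Fin r) (i : Fin (m k)), om.part k i ≤ 1) ∧
  (∀ i : Fin n,
    (∑ k : Fin r, om.part k ⟨i.1, Nat.lt_of_lt_of_le i.2 (hm k)⟩) = 1) ∧
  (∀ (k : Fin r) (i : Fin (m k)), om.part k i = 1 →
    ∀ k' : Fin r, P.π k' = P.π k → k' ≤ k)

instance (P : BlockCtx r g) (hm : ∀ k, n ≤ m k) (om : MultiComp n r m) :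
    Decidable (IsOmega P hm om) := by
  unfold IsOmega; infer_instance

/-- the set `D_{n,g}` of tuples `(n₁, …, n_g)` of non-negative integers summing
to `n` -/
def DComp (n g : ℕ) := {f : Fin g → ℕ // ∑ b, f b = n}

end OmegaLayer

/-!
A basis element `φ_{S,T}` of shape `λ` and types `μ, ν` lies in `Z^p` unless
`α_p(μ) ≠ α_p(ν)` and `a_p(μ) = a_p(λ)`. Since the entries of the `k`-th component of a
semistandard tableau lie in components `≥ k`, counting cells block by block gives
`a_p(μ) ≤ a_p(λ)`; and `a_p` determines `α_p`. So in the exceptional case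
`a_p(ν) < a_p(λ)`, i.e. `φ_{T,S} ∈ Z^p`. As `1 = ∑ φ_μ ∈ S^p` and `1^* = 1`, every `φ_{S,T}`
is `φ_{S,T} · 1^*` or `1 · φ_{T,S}^*`.
-/

open Finset

theorem MultiComp.sum_compSize_eq_card {n r : ℕ} {m : Fin r → ℕ} (lam : MultiComp n r m)
    (s : Finset (Fin r)) : ∑ k ∈ s, lam.compSize k = #{c : lam.Cell | c.1 ∈ s} := by
  rw [card_filter, ← univ_sigma_univ, sum_sigma]
  simp [compSize, apply_ite card, sum_ite_mem]

namespace SSTab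

variable {n r : ℕ} {m : Fin r → ℕ} {lam mu : MultiComp n r m}

theorem sum_compSize_type_eq_card (S : SSTab lam mu) (s : Finset (Fin r)) :
    ∑ k ∈ s, mu.compSize k = #{c : lam.Cell | (S.entry c).1 ∈ s} := by
  rw [card_eq_sum_card_fiberwise (f := S.entry) (t := s.sigma fun _ => univ)
    (fun c hc => by simpa using hc)]
  simp only [MultiComp.compSize, sum_sigma]
  refine sum_congr rfl fun k hk => sum_congr rfl fun i _ => ?_
  rw [S.typeCount ⟨k, i⟩, Fintype.card_subtype]
  congr 1
  ext c
  simp only [mem_filter, mem_univ, true_and, iff_and_self]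
  intro hc
  rw [hc]
  exact hk

theorem sum_compSize_le (S : SSTab lam mu) {s : Finset (Fin r)}
    (hs : IsLowerSet (s : Set (Fin r))) :
    ∑ k ∈ s, mu.compSize k ≤ ∑ k ∈ s, lam.compSize k := by
  rw [S.sum_compSize_type_eq_card, lam.sum_compSize_eq_card]
  refine card_le_card fun c hc => ?_
  simp only [mem_filter, mem_univ, true_and] at hc ⊢
  exact hs (S.compLE c) hc

end SSTab

namespace BlockCtx

variable {r g : ℕ} (P : BlockCtx r g) {n : ℕ} {m : Fin r → ℕ}

theorem aP_le_of_sstab {lam mu : MultiComp n r m} (S : SSTab lam mu) :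
    vecLE (P.aP mu) (P.aP lam) := fun b =>
  S.sum_compSize_le fun _ _ hle hk => by
    simp only [coe_filter, mem_univ, true_and, Set.mem_ofPred_eq] at hk ⊢
    exact (P.mono hle).trans_lt hk

theorem aP_add_alphaP (mu : MultiComp n r m) (b : Fin g) :
    P.aP mu b + P.alphaP mu b = ∑ k with P.π k ≤ b, mu.compSize k := by
  rw [aP, alphaP, ← sum_union]
  · exact sum_congr (by ext; simp [le_iff_lt_or_eq]) fun _ _ => rfl
  · exact disjoint_filter.2 fun _ _ hlt heq => hlt.ne heq

theorem alphaP_eq_of_aP_eq {mu lam : MultiComp n r m} (h : P.aP mu = P.aP lam) :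
    P.alphaP mu = P.alphaP lam := by
  funext b
  have hle : ∑ k with P.π k ≤ b, mu.compSize k = ∑ k with P.π k ≤ b, lam.compSize k := by
    by_cases hb : (b : ℕ) + 1 < g
    · have hs : univ.filter (fun k => P.π k ≤ b) =
          univ.filter (fun k => P.π k < ⟨b + 1, hb⟩) := by
        ext k
        simp only [mem_filter, mem_univ, true_and, Fin.le_def, Fin.lt_def]
        omega
      rw [hs]
      exact congrFun h _
    · have hs : univ.filter (fun k => P.π k ≤ b) = univ := by
        ext k
        simp only [mem_filter, mem_univ, true_and, iff_true, Fin.le_def]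
        omega
      simp only [hs, MultiComp.compSize, mu.sum_eq, lam.sum_eq]
  have hmu := P.aP_add_alphaP mu b
  have hlam := P.aP_add_alphaP lam b
  have hb := congrFun h b
  omega

end BlockCtx

namespace SchurAlgebra

variable {R : Type} [CommRing R] {n r g : ℕ} {m : Fin r → ℕ} {Λ : Finset (MultiComp n r m)}
  (SA : SchurAlgebra R Λ)

theorem astar_astar (x : SA.carrier) : SA.astar (SA.astar x) = x := by
  have : SA.astar ∘ₗ SA.astar = LinearMap.id :=
    SA.bas.ext fun ⟨lam, mu, nu, S, T⟩ => by simp [astar_bas]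
  exact LinearMap.congr_fun this x

theorem astar_one : SA.astar 1 = 1 :=
  calc SA.astar 1 = SA.astar 1 * SA.astar (SA.astar 1) := by rw [astar_astar, mul_one]
    _ = SA.astar (SA.astar 1 * 1) := (SA.astar_mul _ _).symm
    _ = 1 := by rw [mul_one, astar_astar]

theorem phiId_mul_bas_mul_phiId (ρ : LamS Λ) (j : DJMIndex Λ) :
    SA.phiId ρ * SA.bas j * SA.phiId ρ =
      if ρ = j.2.1 ∧ ρ = j.2.2.1 then SA.bas j else 0 := by
  obtain ⟨lam, mu, nu, S, T⟩ := j
  rw [phiId_mul_bas, ite_mul, zero_mul, bas_mul_phiId]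
  by_cases h₁ : ρ = mu <;> by_cases h₂ : ρ = nu <;> simp [h₁, h₂]

theorem bas_mem_ZpSet_of_types_eq (P : BlockCtx r g) (lam : LamP Λ) (mu : LamS Λ)
    (S T : SSTab lam.1 mu.1) : SA.bas ⟨lam, mu, mu, (S, T)⟩ ∈ SA.ZpSet P :=
  ⟨lam, mu, mu, S, T, fun hne => absurd rfl hne, rfl⟩

theorem phiId_mem_span_ZpSet (P : BlockCtx r g) (ρ : LamS Λ) :
    SA.phiId ρ ∈ Submodule.span R (SA.ZpSet P) := by
  have hidem : SA.phiId ρ * SA.phiId ρ = SA.phiId ρ := by simp [phiId_mul]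
  have hsandwich : SA.phiId ρ =
      ∑ j, SA.bas.repr (SA.phiId ρ) j • (SA.phiId ρ * SA.bas j * SA.phiId ρ) :=
    calc SA.phiId ρ = SA.phiId ρ * SA.phiId ρ * SA.phiId ρ := by rw [hidem, hidem]
      _ = SA.phiId ρ * (∑ j, SA.bas.repr (SA.phiId ρ) j • SA.bas j) * SA.phiId ρ := by
        rw [SA.bas.sum_repr]
      _ = _ := by simp only [mul_sum, sum_mul, mul_smul_comm, smul_mul_assoc]
  rw [hsandwich]
  refine Submodule.sum_mem _ fun j _ => Submodule.smul_mem _ _ ?_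
  rw [phiId_mul_bas_mul_phiId]
  split_ifs with h
  · obtain ⟨lam, mu, nu, S, T⟩ := j
    obtain ⟨rfl, rfl⟩ := h
    exact Submodule.subset_span (SA.bas_mem_ZpSet_of_types_eq P lam ρ S T)
  · exact Submodule.zero_mem _

theorem one_mem_span_ZpSet (P : BlockCtx r g) :
    (1 : SA.carrier) ∈ Submodule.span R (SA.ZpSet P) :=
  SA.phiId_sum ▸ Submodule.sum_mem _ fun ρ _ => SA.phiId_mem_span_ZpSet P ρ

theorem bas_mem_ZpSet_or_astar_mem (P : BlockCtx r g) (j : DJMIndex Λ) :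
    SA.bas j ∈ SA.ZpSet P ∨ SA.astar (SA.bas j) ∈ SA.ZpSet P := by
  obtain ⟨lam, mu, nu, S, T⟩ := j
  by_cases hα : P.alphaP mu.1 = P.alphaP nu.1
  · exact Or.inl ⟨lam, mu, nu, S, T, fun hne => absurd hα hne, rfl⟩
  by_cases hμ : P.aP mu.1 = P.aP lam.1
  · have hν : P.aP nu.1 ≠ P.aP lam.1 := fun h =>
      hα ((P.alphaP_eq_of_aP_eq hμ).trans (P.alphaP_eq_of_aP_eq h).symm)
    rw [astar_bas]
    exact Or.inr ⟨lam, nu, mu, T, S, fun _ => ⟨P.aP_le_of_sstab T, hν⟩, rfl⟩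
  · exact Or.inl ⟨lam, mu, nu, S, T, fun _ => ⟨P.aP_le_of_sstab S, hμ⟩, rfl⟩

end SchurAlgebra

theorem schur_eq_Sp_mul_SpStar_general
    {R : Type} [CommRing R] {n r g : ℕ} {m : Fin r → ℕ}
    {Λ : Finset (MultiComp n r m)}
    (SA : SchurAlgebra R Λ) (P : BlockCtx r g) :
    ∀ x : SA.carrier,
      x ∈ AddSubmonoid.closure
        {z : SA.carrier | ∃ a ∈ Submodule.span R (SA.ZpSet P),
          ∃ b ∈ Submodule.span R (SA.ZpSet P), z = a * SA.astar b} := by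
  intro x
  rw [← SA.bas.sum_repr x]
  refine AddSubmonoid.sum_mem _ fun j _ => AddSubmonoid.subset_closure ?_
  have hone := SA.one_mem_span_ZpSet P
  rcases SA.bas_mem_ZpSet_or_astar_mem P j with h | h
  · exact ⟨_, Submodule.smul_mem _ _ (Submodule.subset_span h), 1, hone,
      by rw [SA.astar_one, mul_one]⟩
  · exact ⟨SA.bas.repr x j • 1, Submodule.smul_mem _ _ hone, _, Submodule.subset_span h,
      by rw [SA.astar_astar, smul_one_mul]⟩

theorem schur_eq_Sp_mul_SpStar
    {R : Type} [CommRing R] [IsDomain R] {n r g : ℕ} {m : Fin r → ℕ}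
    (hn : 0 < n) (hr : 0 < r) (hm : ∀ k, 0 < m k)
    {Λ : Finset (MultiComp n r m)} (hΛ : Saturated Λ)
    (SA : SchurAlgebra R Λ) (P : BlockCtx r g) :
    ∀ x : SA.carrier,
      x ∈ AddSubmonoid.closure
        {z : SA.carrier | ∃ a ∈ Submodule.span R (SA.ZpSet P),
          ∃ b ∈ Submodule.span R (SA.ZpSet P), z = a * SA.astar b} :=
  schur_eq_Sp_mul_SpStar_general SA P
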